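/- Let E, F ⊆ F_q^d. For r ∈ F_q let ν(r) be the number of quadruples (e₁,f₁,e₂,f₂) ∈ E × F × E × F with ||e₁ − e₂|| + ||f₁ − f₂|| = r, and let μ(r) = #{(x,y) ∈ E × E : ||x − y|| = r}. Then Σ_r ν(r)² ≤ |E|⁴|F|⁴/q + q^d |F|² Σ_r μ(r)². -/

import Mathlib

open Finset

/-- `||x - y|| = ∑ (x_i - y_i)²`. -/
def dist2 {K : Type} [Field K] {d : ℕ} (x y : Fin d → K) : K := ∑ i, (x i - y i) ^ 2

/-!
Fix a primitive additive character `ψ` of `F_q`. For a finite family of values `v b`, Plancherel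
gives `∑_ξ |∑_b ψ(ξ v b)|² = q ∑_r #{b | v b = r}²`. The transform of the distribution of
`‖e₁ - e₂‖ + ‖g₁ - g₂‖` factors as `F ξ * H ξ`, the transforms of the distance distributions on
`E` and on `G`, so `q ∑ ν² = ∑_ξ |F ξ|² |H ξ|²`. The term `ξ = 0` is `|E|⁴|G|⁴`. For `ξ ≠ 0`,
Cauchy–Schwarz gives `|H ξ|² ≤ |G| ∑_x |∑_{g ∈ G} ψ(ξ ‖x - g‖)|² = q^d |G|²`: the last sum is
`q^d |G|` because `‖x - a‖ - ‖x - b‖` is affine in `x` with linear part `-2⟨x, a - b⟩`, which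
vanishes only for `a = b` as `q` is odd. Plancherel for `μ` turns the remaining `∑_ξ |F ξ|²`
into `q ∑ μ²`.
-/

theorem sum_sq_card_fiber_eq_card_filter_eq {α β : Type*} [Fintype α] [DecidableEq α]
    (Q : Finset β) (v : β → α) :
    ∑ r, #{b ∈ Q | v b = r} ^ 2 = #{p ∈ Q ×ˢ Q | v p.1 = v p.2} := by
  rw [card_eq_sum_card_fiberwise (f := fun p => v p.1) (t := univ) fun _ _ => mem_univ _]
  refine sum_congr rfl fun r _ => ?_
  rw [sq, ← card_product]
  congr 1
  ext ⟨a, b⟩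
  simp only [mem_product, mem_filter]
  grind

theorem sum_product_product_mul {α β R : Type*} [CommSemiring R] (E : Finset α) (G : Finset β)
    (f : α → α → R) (g : β → β → R) :
    ∑ P ∈ (E ×ˢ G) ×ˢ (E ×ˢ G), f P.1.1 P.2.1 * g P.1.2 P.2.2
      = (∑ p ∈ E ×ˢ E, f p.1 p.2) * ∑ p ∈ G ×ˢ G, g p.1 p.2 := by
  simp only [sum_product, sum_mul_sum]

theorem AddChar.map_sum_eq_prod {A M ι : Type*} [AddCommMonoid A] [CommMonoid M]
    (ψ : AddChar A M) (s : Finset ι) (f : ι → A) :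
    ψ (∑ i ∈ s, f i) = ∏ i ∈ s, ψ (f i) := by
  induction s using Finset.cons_induction with
  | empty => simp
  | cons a s ha ih => rw [sum_cons, prod_cons, AddChar.map_add_eq_mul, ih]

theorem AddChar.ofReal_normSq_sum {A ι : Type*} [AddCommGroup A] [Finite A]
    (ψ : AddChar A ℂ) (Q : Finset ι) (f : ι → A) :
    (Complex.normSq (∑ b ∈ Q, ψ (f b)) : ℂ) = ∑ p ∈ Q ×ˢ Q, ψ (f p.1 - f p.2) := by
  rw [← Complex.mul_conj, map_sum, sum_mul_sum, sum_product]
  simp_rw [← AddChar.map_neg_eq_conj, ← AddChar.map_add_eq_mul, sub_eq_add_neg]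

section

variable {K : Type} [Field K] [Fintype K] [DecidableEq K] {ψ : AddChar K ℂ} {ξ : K}

theorem AddChar.sum_normSq_sum_mul (hψ : ψ.IsPrimitive) {β : Type*} (Q : Finset β) (v : β → K) :
    ∑ ξ, Complex.normSq (∑ b ∈ Q, ψ (ξ * v b))
      = Fintype.card K * ∑ r, (#{b ∈ Q | v b = r} : ℝ) ^ 2 := by
  apply Complex.ofReal_injective
  push_cast
  simp_rw [AddChar.ofReal_normSq_sum, ← mul_sub]
  rw [sum_comm]
  simp_rw [AddChar.sum_mulShift _ hψ, sub_eq_zero]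
  simp only [Nat.cast_ite, Nat.cast_zero, sum_ite, sum_const_zero, add_zero, sum_const,
    nsmul_eq_mul]
  rw [mul_comm]
  exact_mod_cast congrArg _ (sum_sq_card_fiber_eq_card_filter_eq Q v).symm

theorem AddChar.sum_mul_sq_sub_sq (hψ : ψ.IsPrimitive) (h2 : (2 : K) ≠ 0) (hξ : ξ ≠ 0) (s t : K) :
    ∑ y, ψ (ξ * ((y - s) ^ 2 - (y - t) ^ 2)) = if s = t then (Fintype.card K : ℂ) else 0 := by
  split_ifs with h
  · simp [h]
  · have hlin : ∀ y, ξ * ((y - s) ^ 2 - (y - t) ^ 2)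
        = y * (2 * ξ * (t - s)) + ξ * (s ^ 2 - t ^ 2) := fun y => by ring
    simp_rw [hlin, AddChar.map_add_eq_mul, ← sum_mul, AddChar.sum_mulShift _ hψ]
    simp [h2, hξ, sub_eq_zero, Ne.symm h]

theorem AddChar.sum_mul_dist2_sub_dist2 (hψ : ψ.IsPrimitive) (h2 : (2 : K) ≠ 0) (hξ : ξ ≠ 0)
    {d : ℕ} (a b : Fin d → K) :
    ∑ x, ψ (ξ * (dist2 x a - dist2 x b)) = if a = b then (Fintype.card K : ℂ) ^ d else 0 := by
  calc ∑ x, ψ (ξ * (dist2 x a - dist2 x b))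
      = ∑ x : Fin d → K, ∏ i, ψ (ξ * ((x i - a i) ^ 2 - (x i - b i) ^ 2)) := by
        simp_rw [dist2, ← sum_sub_distrib, mul_sum, AddChar.map_sum_eq_prod]
    _ = ∏ i, ∑ y, ψ (ξ * ((y - a i) ^ 2 - (y - b i) ^ 2)) := by rw [Fintype.prod_sum]
    _ = _ := by
        simp_rw [AddChar.sum_mul_sq_sub_sq hψ h2 hξ]
        simp only [Fintype.prod_ite_zero, prod_const, card_univ, Fintype.card_fin, ← funext_iff]

theorem AddChar.sum_normSq_sum_mul_dist2 (hψ : ψ.IsPrimitive) (h2 : (2 : K) ≠ 0) (hξ : ξ ≠ 0)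
    {d : ℕ} (G : Finset (Fin d → K)) :
    ∑ x, Complex.normSq (∑ g ∈ G, ψ (ξ * dist2 x g)) = Fintype.card K ^ d * #G := by
  apply Complex.ofReal_injective
  push_cast
  simp_rw [AddChar.ofReal_normSq_sum, ← mul_sub]
  rw [sum_comm]
  simp_rw [AddChar.sum_mul_dist2_sub_dist2 hψ h2 hξ, sum_product]
  simp [sum_ite_eq, mul_comm]

theorem AddChar.normSq_sum_mul_dist2_le (hψ : ψ.IsPrimitive) (h2 : (2 : K) ≠ 0) (hξ : ξ ≠ 0)
    {d : ℕ} (G : Finset (Fin d → K)) :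
    Complex.normSq (∑ p ∈ G ×ˢ G, ψ (ξ * dist2 p.1 p.2)) ≤ Fintype.card K ^ d * #G ^ 2 := by
  set S : (Fin d → K) → ℂ := fun x => ∑ g ∈ G, ψ (ξ * dist2 x g)
  calc Complex.normSq (∑ p ∈ G ×ˢ G, ψ (ξ * dist2 p.1 p.2))
      = ‖∑ g ∈ G, S g‖ ^ 2 := by rw [sum_product, Complex.sq_norm]
    _ ≤ (∑ g ∈ G, ‖S g‖) ^ 2 := by gcongr; exact norm_sum_le _ _
    _ ≤ #G * ∑ g ∈ G, ‖S g‖ ^ 2 := sq_sum_le_card_mul_sum_sq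
    _ ≤ #G * ∑ x, Complex.normSq (S x) := by
        simp_rw [Complex.sq_norm]
        exact mul_le_mul_of_nonneg_left (sum_le_sum_of_subset_of_nonneg (subset_univ G)
          fun _ _ _ => Complex.normSq_nonneg _) (Nat.cast_nonneg _)
    _ = Fintype.card K ^ d * #G ^ 2 := by
        rw [AddChar.sum_normSq_sum_mul_dist2 hψ h2 hξ]; ring

end

theorem stmt_16_general {K : Type} [Field K] [Fintype K] [DecidableEq K]
    (hodd : Odd (Fintype.card K)) (d : ℕ)
    (E G : Finset (Fin d → K)) :
    ∑ r : K,
        ((((E ×ˢ G) ×ˢ (E ×ˢ G)).filter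
            (fun p => dist2 p.1.1 p.2.1 + dist2 p.1.2 p.2.2 = r)).card : ℝ) ^ 2
      ≤ (E.card : ℝ) ^ 4 * (G.card : ℝ) ^ 4 / (Fintype.card K : ℝ)
        + (Fintype.card K : ℝ) ^ d * (G.card : ℝ) ^ 2 *
            ∑ r : K, (((E ×ˢ E).filter (fun p => dist2 p.1 p.2 = r)).card : ℝ) ^ 2 := by
  have h2 : (2 : K) ≠ 0 := Ring.two_ne_zero fun hK => by
    have := FiniteField.even_card_of_char_two hK
    rw [Nat.odd_iff] at hodd
    omega
  set ψ := AddChar.FiniteField.primitiveChar_to_Complex K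
  have hψ : ψ.IsPrimitive := AddChar.FiniteField.primitiveChar_to_Complex_isPrimitive K
  set F : K → ℂ := fun ξ => ∑ p ∈ E ×ˢ E, ψ (ξ * dist2 p.1 p.2)
  set H : K → ℂ := fun ξ => ∑ p ∈ G ×ˢ G, ψ (ξ * dist2 p.1 p.2)
  have hq : (0 : ℝ) < Fintype.card K := Nat.cast_pos.mpr Fintype.card_pos
  have hν : Fintype.card K * ∑ r : K,
        ((((E ×ˢ G) ×ˢ (E ×ˢ G)).filter
            (fun p => dist2 p.1.1 p.2.1 + dist2 p.1.2 p.2.2 = r)).card : ℝ) ^ 2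
      = ∑ ξ, Complex.normSq (F ξ) * Complex.normSq (H ξ) := by
    rw [← AddChar.sum_normSq_sum_mul hψ]
    refine sum_congr rfl fun ξ _ => ?_
    simp only [mul_add, AddChar.map_add_eq_mul, ← Complex.normSq_mul]
    rw [sum_product_product_mul E G (fun a b => ψ (ξ * dist2 a b)) fun a b => ψ (ξ * dist2 a b)]
  have hμ := AddChar.sum_normSq_sum_mul hψ (E ×ˢ E) fun p => dist2 p.1 p.2
  have hFH0 : Complex.normSq (F 0) * Complex.normSq (H 0) = (#E : ℝ) ^ 4 * #G ^ 4 := by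
    simp only [F, H, zero_mul, AddChar.map_zero_eq_one, sum_const, card_product, nsmul_one]
    rw [Complex.normSq_natCast, Complex.normSq_natCast]
    push_cast
    ring
  rw [div_add' _ _ _ hq.ne', le_div_iff₀ hq, mul_comm, hν]
  calc ∑ ξ, Complex.normSq (F ξ) * Complex.normSq (H ξ)
      = Complex.normSq (F 0) * Complex.normSq (H 0)
        + ∑ ξ ∈ univ.erase 0, Complex.normSq (F ξ) * Complex.normSq (H ξ) :=
        (add_sum_erase _ _ (mem_univ 0)).symm
    _ ≤ (#E : ℝ) ^ 4 * #G ^ 4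
        + ∑ ξ ∈ univ.erase 0, Complex.normSq (F ξ) * (Fintype.card K ^ d * #G ^ 2) := by
        rw [hFH0]
        gcongr with ξ hξ
        · exact Complex.normSq_nonneg _
        · exact AddChar.normSq_sum_mul_dist2_le hψ h2 (ne_of_mem_erase hξ) G
    _ ≤ (#E : ℝ) ^ 4 * #G ^ 4 + ∑ ξ, Complex.normSq (F ξ) * (Fintype.card K ^ d * #G ^ 2) := by
        gcongr
        · exact fun _ _ _ => mul_nonneg (Complex.normSq_nonneg _) (by positivity)
        · exact erase_subset _ _
    _ = _ := by rw [← sum_mul, hμ]; ring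

/-- For `E, F ⊆ F_q^d`, with `ν(r)` the number of quadruples
`(e₁,f₁,e₂,f₂) ∈ E × F × E × F` with `||e₁-e₂|| + ||f₁-f₂|| = r` and `μ(r)` the
number of pairs in `E × E` at distance `r`:
`∑_r ν(r)² ≤ |E|⁴|F|⁴/q + q^d |F|² ∑_r μ(r)²`. -/
theorem stmt_16 {K : Type} [Field K] [Fintype K] [DecidableEq K]
    (hodd : Odd (Fintype.card K)) (d : ℕ) (hd : 1 ≤ d)
    (E G : Finset (Fin d → K)) :
    ∑ r : K,
        ((((E ×ˢ G) ×ˢ (E ×ˢ G)).filter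
            (fun p => dist2 p.1.1 p.2.1 + dist2 p.1.2 p.2.2 = r)).card : ℝ) ^ 2
      ≤ (E.card : ℝ) ^ 4 * (G.card : ℝ) ^ 4 / (Fintype.card K : ℝ)
        + (Fintype.card K : ℝ) ^ d * (G.card : ℝ) ^ 2 *
            ∑ r : K, (((E ×ˢ E).filter (fun p => dist2 p.1 p.2 = r)).card : ℝ) ^ 2 :=
  stmt_16_general hodd d E G
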